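/- Let (X,d) be a compact metric space, f_{1,∞} an NDS on X, Z ⊆ X, ψ ∈ C(X,ℝ), ε > 0, δ > 0, and α ∈ ℝ. Let N ≥ 2 be such that n² e^{−nδ} ≤ 1 for all n ≥ N. Then 𝓜(N, α+δ, 6ε, Z, ψ) ≤ W(N, α, ε, Z, ψ). -/

import Mathlib

open Filter MeasureTheory Set ENNReal

noncomputable section

variable {X : Type} [MetricSpace X]

/-- The iterate `f_1^n = f_n ∘ ⋯ ∘ f_1` of the NDS `f`, where `f 0` is the first map `f_1`. -/
def nIter (f : ℕ → X → X) : ℕ → X → X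
  | 0 => id
  | n + 1 => f n ∘ nIter f n

/-- The Bowen (dynamical) ball `B_n(x, ε)` for the Bowen metric
`d_n(x,y) = max_{0 ≤ j < n} d(f_1^j x, f_1^j y)`. -/
def bowenBall (f : ℕ → X → X) (n : ℕ) (x : X) (ε : ℝ) : Set X :=
  {y | ∀ j < n, dist (nIter f j x) (nIter f j y) < ε}

/-- The Birkhoff sum `S_{1,n} ψ (x) = ∑_{j=0}^{n-1} ψ(f_1^j x)`. -/
def birkSum (f : ℕ → X → X) (ψ : X → ℝ) (n : ℕ) (x : X) : ℝ :=
  ∑ j ∈ Finset.range n, ψ (nIter f j x)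

/-- `S_{1,n} ψ (x, ε) = sup_{y ∈ B_n(x,ε)} S_{1,n} ψ (y)`. -/
def birkSupBall (f : ℕ → X → X) (ψ : X → ℝ) (n : ℕ) (x : X) (ε : ℝ) : ℝ :=
  sSup (birkSum f ψ n '' bowenBall f n x ε)

/-- `M(n, α, ε, Z, ψ)`: infimum of `∑_i exp(-α n_i + S_{1,n_i}ψ(x_i, ε))` over all finite or
countable covers `Z ⊆ ⋃_i B_{n_i}(x_i, ε)` with `n_i ≥ n`. -/
def Mpre (f : ℕ → X → X) (ψ : X → ℝ) (Z : Set X) (n : ℕ) (α ε : ℝ) : ℝ≥0∞ :=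
  sInf { S : ℝ≥0∞ | ∃ (u : Set ℕ) (c : ℕ → X) (m : ℕ → ℕ),
    (∀ i ∈ u, n ≤ m i) ∧ (Z ⊆ ⋃ i ∈ u, bowenBall f (m i) (c i) ε) ∧
    S = ∑' i : u, ENNReal.ofReal (Real.exp (-α * (m i : ℝ) + birkSupBall f ψ (m i) (c i) ε)) }

/-- `𝓜(n, α, ε, Z, ψ)`: as `Mpre` but with the Birkhoff sums evaluated at the centers. -/
def MpreC (f : ℕ → X → X) (ψ : X → ℝ) (Z : Set X) (n : ℕ) (α ε : ℝ) : ℝ≥0∞ :=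
  sInf { S : ℝ≥0∞ | ∃ (u : Set ℕ) (c : ℕ → X) (m : ℕ → ℕ),
    (∀ i ∈ u, n ≤ m i) ∧ (Z ⊆ ⋃ i ∈ u, bowenBall f (m i) (c i) ε) ∧
    S = ∑' i : u, ENNReal.ofReal (Real.exp (-α * (m i : ℝ) + birkSum f ψ (m i) (c i))) }

/-- `M(α, ε, Z, ψ) = lim_{n→∞} M(n, α, ε, Z, ψ)`; the quantity is nondecreasing in `n`,
so the limit is the supremum. -/
def Mlim (f : ℕ → X → X) (ψ : X → ℝ) (Z : Set X) (α ε : ℝ) : ℝ≥0∞ :=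
  ⨆ n : ℕ, Mpre f ψ Z n α ε

/-- `𝓜(α, ε, Z, ψ) = lim_{n→∞} 𝓜(n, α, ε, Z, ψ)`. -/
def MlimC (f : ℕ → X → X) (ψ : X → ℝ) (Z : Set X) (α ε : ℝ) : ℝ≥0∞ :=
  ⨆ n : ℕ, MpreC f ψ Z n α ε

/-- `P^B(ε, Z, ψ) = inf {α : M(α, ε, Z, ψ) = 0}`, as an extended real. -/
def PBeps (f : ℕ → X → X) (ψ : X → ℝ) (Z : Set X) (ε : ℝ) : EReal :=
  sInf (Real.toEReal '' {α : ℝ | Mlim f ψ Z α ε = 0})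

/-- `𝒫^B(ε, Z, ψ) = inf {α : 𝓜(α, ε, Z, ψ) = 0}`. -/
def PBCeps (f : ℕ → X → X) (ψ : X → ℝ) (Z : Set X) (ε : ℝ) : EReal :=
  sInf (Real.toEReal '' {α : ℝ | MlimC f ψ Z α ε = 0})

/-- The Pesin–Pitskel topological pressure `P^B_{f_{1,∞}}(Z, ψ) = lim_{ε→0} P^B(ε, Z, ψ)`. -/
def PB (f : ℕ → X → X) (ψ : X → ℝ) (Z : Set X) : EReal :=
  limUnder (nhdsWithin 0 (Ioi 0)) fun ε : ℝ => PBeps f ψ Z ε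

/-- `W(n, α, ε, Z, ψ)`: the weighted analogue of `Mpre`. -/
def Wpre (f : ℕ → X → X) (ψ : X → ℝ) (Z : Set X) (n : ℕ) (α ε : ℝ) : ℝ≥0∞ :=
  sInf { S : ℝ≥0∞ | ∃ (u : Set ℕ) (cx : ℕ → X) (m : ℕ → ℕ) (c : ℕ → ℝ),
    (∀ i ∈ u, 0 < c i) ∧ (∀ i ∈ u, n ≤ m i) ∧
    (∀ z ∈ Z, 1 ≤ ∑' i : u,
      (bowenBall f (m i) (cx i) ε).indicator (fun _ => ENNReal.ofReal (c i)) z) ∧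
    S = ∑' i : u, ENNReal.ofReal (c i) *
      ENNReal.ofReal (Real.exp (-α * (m i : ℝ) + birkSupBall f ψ (m i) (cx i) ε)) }

/-- `W(α, ε, Z, ψ) = lim_{n→∞} W(n, α, ε, Z, ψ)`. -/
def Wlim (f : ℕ → X → X) (ψ : X → ℝ) (Z : Set X) (α ε : ℝ) : ℝ≥0∞ :=
  ⨆ n : ℕ, Wpre f ψ Z n α ε

/-- `P^W(ε, Z, ψ)`: the critical value of `α` at which `W(α, ε, Z, ψ)` jumps from `∞` to `0`. -/
def PWeps (f : ℕ → X → X) (ψ : X → ℝ) (Z : Set X) (ε : ℝ) : EReal :=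
  sInf (Real.toEReal '' {α : ℝ | Wlim f ψ Z α ε = 0})

/-- The weighted topological pressure `P^W_{f_{1,∞}}(Z, ψ) = lim_{ε→0} P^W(ε, Z, ψ)`. -/
def PW (f : ℕ → X → X) (ψ : X → ℝ) (Z : Set X) : EReal :=
  limUnder (nhdsWithin 0 (Ioi 0)) fun ε : ℝ => PWeps f ψ Z ε

/-- Bowen topological entropy `h^B_top(f_{1,∞}, Z)`, i.e. pressure of the zero potential. -/
def hBtop (f : ℕ → X → X) (Z : Set X) : EReal := PB f (fun _ => 0) Z

/-- Weighted Bowen topological entropy `h^{WB}_top(f_{1,∞}, Z)`. -/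
def hWBtop (f : ℕ → X → X) (Z : Set X) : EReal := PW f (fun _ => 0) Z

/-- `EReal → ℝ≥0∞`, sending `⊤` to `⊤` and everything negative to `0`. -/
def ERealToENNReal (x : EReal) : ℝ≥0∞ := if x = ⊤ then ⊤ else ENNReal.ofReal x.toReal

variable [MeasurableSpace X]

/-- The measure-theoretic local pressure
`P_μ(x,ψ) = lim_{ε→0} liminf_{n→∞} (-log μ(B_n(x,ε)) + S_{1,n}ψ(x))/n`. -/
def Ploc (f : ℕ → X → X) (μ : Measure X) (ψ : X → ℝ) (x : X) : EReal :=
  limUnder (nhdsWithin 0 (Ioi 0)) fun ε : ℝ =>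
    Filter.atTop.liminf fun n : ℕ =>
      (((n : ℝ)⁻¹ : ℝ) : EReal) *
        (-(ENNReal.log (μ (bowenBall f n x ε))) + ((birkSum f ψ n x : ℝ) : EReal))

/-- The integral of an extended-real-valued function: the difference of the lower integrals of
its positive and negative parts. -/
def ERealIntegral (μ : Measure X) (g : X → EReal) : EReal :=
  ((∫⁻ x, ERealToENNReal (g x) ∂μ : ℝ≥0∞) : EReal)
    - ((∫⁻ x, ERealToENNReal (-(g x)) ∂μ : ℝ≥0∞) : EReal)

/-- The measure-theoretic pressure `P_μ(X, ψ) = ∫ P_μ(x, ψ) dμ(x)`. -/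
def Pmeas (f : ℕ → X → X) (μ : Measure X) (ψ : X → ℝ) : EReal :=
  ERealIntegral μ (Ploc f μ ψ)

/-- The measure-theoretic local lower entropy `h̲_μ(f_{1,∞}, x)`. -/
def hloc (f : ℕ → X → X) (μ : Measure X) (x : X) : EReal := Ploc f μ (fun _ => 0) x

/-- The measure-theoretic lower entropy `h̲_μ(f_{1,∞}) = ∫ h̲_μ(f_{1,∞}, x) dμ(x)`. -/
def hmeas (f : ℕ → X → X) (μ : Measure X) : EReal := Pmeas f μ (fun _ => 0)

/-! Split the weight `∑ᵢ cᵢ χ_{B_{mᵢ}(xᵢ, ε)}(z) ≥ 1` of a point `z ∈ Z` according to the length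
`n = mᵢ` of the balls. Since `∑_{n ≥ 2} n⁻² < 1`, some level `n ≥ N` carries weight more than
`n⁻² ≥ e^{-nδ}` at `z`. At each level take a maximal `6ε`-separated set `Tₙ` (in `dₙ`) of such
points: the balls `Bₙ(t, 6ε)`, `t ∈ Tₙ`, cover `Z`, and a ball `Bₙ(xᵢ, ε)` contains at most one
point of `Tₙ`. So `e^{-(α+δ)n + Sₙψ(t)}` is bounded by the part
`∑_{i : t ∈ Bₙ(xᵢ, ε)} cᵢ e^{-αn + Sₙψ(xᵢ, ε)}` of the weighted sum, and these parts are disjoint. -/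

section

omit [MeasurableSpace X]

open Function

variable {f : ℕ → X → X} {ψ : X → ℝ} {n : ℕ} {x y z : X} {r s : ℝ}

theorem continuous_nIter (hf : ∀ n, Continuous (f n)) (j : ℕ) : Continuous (nIter f j) := by
  induction j with
  | zero => exact continuous_id
  | succ j ih => exact (hf j).comp ih

theorem continuous_birkSum (hf : ∀ n, Continuous (f n)) (hψ : Continuous ψ) (n : ℕ) :
    Continuous (birkSum f ψ n) :=
  continuous_finsetSum _ fun j _ => hψ.comp (continuous_nIter hf j)

theorem birkSum_le_birkSupBall [CompactSpace X] (hf : ∀ n, Continuous (f n)) (hψ : Continuous ψ)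
    (hy : y ∈ bowenBall f n x r) : birkSum f ψ n y ≤ birkSupBall f ψ n x r :=
  le_csSup ((isCompact_univ.image (continuous_birkSum hf hψ n)).bddAbove.mono
    (image_mono (subset_univ _))) (mem_image_of_mem _ hy)

theorem mem_bowenBall_self (hr : 0 < r) : x ∈ bowenBall f n x r := fun _ _ => by
  rwa [dist_self]

theorem mem_bowenBall_comm : y ∈ bowenBall f n x r ↔ x ∈ bowenBall f n y r := by
  simp [bowenBall, dist_comm]

theorem mem_bowenBall_of_mem_of_mem (hy : y ∈ bowenBall f n x r) (hz : z ∈ bowenBall f n x s) :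
    z ∈ bowenBall f n y (r + s) := fun j hj =>
  (dist_triangle_left _ _ _).trans_lt (add_lt_add (hy j hj) (hz j hj))

theorem bowenBall_mono (h : r ≤ s) : bowenBall f n x r ⊆ bowenBall f n x s :=
  fun _ hy j hj => (hy j hj).trans_le h

theorem exists_maximal_pairwise_subset {α : Type*} {p : α → α → Prop} (hp : ∀ a b, p a b → p b a)
    (A : Set α) : ∃ T ⊆ A, T.Pairwise p ∧ ∀ a ∈ A, a ∉ T → ∃ t ∈ T, ¬ p t a := by
  obtain ⟨T, ⟨hTA, hT⟩, hmax⟩ := zorn_subset {T | T ⊆ A ∧ T.Pairwise p} fun c hc hchain =>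
    ⟨⋃₀ c, ⟨sUnion_subset fun s hs => (hc hs).1, hchain.pairwise_sUnion.2 fun s hs => (hc hs).2⟩,
      fun s hs => subset_sUnion_of_mem hs⟩
  refine ⟨T, hTA, hT, fun a ha haT => ?_⟩
  by_contra! hclose
  exact haT <| hmax
    ⟨insert_subset ha hTA, hT.insert fun t ht _ => ⟨hp _ _ (hclose t ht), hclose t ht⟩⟩
    (subset_insert a T) (mem_insert a T)

theorem exists_bowenBall_separated_spanning (A : Set X) (n : ℕ) (hr : 0 < r) :
    ∃ T ⊆ A, T.Pairwise (fun x y => y ∉ bowenBall f n x r) ∧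
      ∀ a ∈ A, ∃ t ∈ T, a ∈ bowenBall f n t r := by
  obtain ⟨T, hTA, hT, hmax⟩ := exists_maximal_pairwise_subset
    (p := fun x y => y ∉ bowenBall f n x r) (fun _ _ h => mem_bowenBall_comm.not.mp h) A
  refine ⟨T, hTA, hT, fun a ha => ?_⟩
  by_cases haT : a ∈ T
  · exact ⟨a, haT, mem_bowenBall_self hr⟩
  · obtain ⟨t, ht, hta⟩ := hmax a ha haT
    exact ⟨t, ht, not_not.mp hta⟩

theorem MpreC_le_tsum [Nonempty X] {Z : Set X} {N : ℕ} {α : ℝ} {ι : Type*} [Countable ι]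
    (c : ι → X) (m : ι → ℕ) (hm : ∀ i, N ≤ m i) (hZ : Z ⊆ ⋃ i, bowenBall f (m i) (c i) r) :
    MpreC f ψ Z N α r ≤ ∑' i, ENNReal.ofReal (Real.exp (-α * m i + birkSum f ψ (m i) (c i))) := by
  obtain ⟨e, he⟩ := Countable.exists_injective_nat ι
  let c' := extend e c fun _ => Classical.arbitrary X
  let m' := extend e m fun _ => N
  refine sInf_le ⟨range e, c', m', forall_mem_range.2 fun i => ?_, ?_, ?_⟩
  · simpa [m', he.extend_apply] using hm i
  · simpa [c', m', he.extend_apply] using hZ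
  · rw [tsum_range (fun k => ENNReal.ofReal (Real.exp (-α * m' k + birkSum f ψ (m' k) (c' k)))) he]
    simp [c', m', he.extend_apply]

theorem tsum_tsum_subtype_le_of_pairwise_disjoint {ι κ : Type*} {I : ι → Set κ} {S : Set κ}
    (hI : Pairwise (Disjoint on I)) (hIS : ∀ p, I p ⊆ S) (w : κ → ℝ≥0∞) :
    ∑' p, ∑' k : I p, w k ≤ ∑' k : S, w k := by
  rw [← ENNReal.tsum_biUnion fun p _ q _ hpq => hI hpq]
  exact tsum_mono_subtype w (iUnion_subset hIS)

theorem countable_of_pairwise_disjoint_nonempty {ι κ : Type*} [Countable κ] {I : ι → Set κ}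
    (hI : Pairwise (Disjoint on I)) (hne : ∀ p, (I p).Nonempty) : Countable ι :=
  Injective.countable (f := fun p => (hne p).some) fun p q h => by_contra fun hpq =>
    (hI hpq).ne_of_mem (hne p).some_mem (hne q).some_mem h

theorem tsum_ofReal_inv_sq_add_two_lt_one :
    ∑' n : ℕ, ENNReal.ofReal (1 / ((n : ℝ) + 2) ^ 2) < 1 := by
  have hsum : HasSum (fun n : ℕ => 1 / ((n : ℝ) + 2) ^ 2) (Real.pi ^ 2 / 6 - 1) := by
    simpa [Finset.sum_range_succ] using (hasSum_nat_add_iff' 2).2 hasSum_zeta_two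
  rw [← ENNReal.ofReal_tsum_of_nonneg (fun n => by positivity) hsum.summable, hsum.tsum_eq,
    ENNReal.ofReal_lt_one]
  nlinarith [Real.pi_lt_d2, Real.pi_pos]

section WeightedCover

variable {u : Set ℕ} {cx : ℕ → X} {m : ℕ → ℕ} {c : ℕ → ℝ}

def levelIndices (f : ℕ → X → X) (u : Set ℕ) (cx : ℕ → X) (m : ℕ → ℕ) (r : ℝ) (n : ℕ)
    (z : X) : Set ℕ :=
  {i | i ∈ u ∧ m i = n ∧ z ∈ bowenBall f n (cx i) r}

def levelWeight (f : ℕ → X → X) (u : Set ℕ) (cx : ℕ → X) (m : ℕ → ℕ) (c : ℕ → ℝ) (r : ℝ)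
    (n : ℕ) (z : X) : ℝ≥0∞ :=
  ∑' i : levelIndices f u cx m r n z, ENNReal.ofReal (c i)

theorem tsum_levelWeight : ∑' n, levelWeight f u cx m c r n z =
    ∑' i : u, (bowenBall f (m i) (cx i) r).indicator (fun _ => ENNReal.ofReal (c i)) z := by
  simp only [levelWeight, tsum_subtype _ fun i => ENNReal.ofReal (c i),
    tsum_subtype u fun i =>
      (bowenBall f (m i) (cx i) r).indicator (fun _ => ENNReal.ofReal (c i)) z]
  rw [ENNReal.tsum_comm]
  refine tsum_congr fun i => ?_
  rw [tsum_eq_single (m i) fun n hn => indicator_of_notMem (fun h => hn h.2.1.symm) _]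
  by_cases hi : i ∈ u <;> by_cases hz : z ∈ bowenBall f (m i) (cx i) r <;>
    simp [levelIndices, indicator, hi, hz]

theorem nonempty_levelIndices_of_levelWeight_ne_zero (h : levelWeight f u cx m c r n z ≠ 0) :
    (levelIndices f u cx m r n z).Nonempty := by
  contrapose! h
  simp [levelWeight, h]

theorem exists_inv_sq_lt_levelWeight {N : ℕ} (hN2 : 2 ≤ N) (hm : ∀ i ∈ u, N ≤ m i)
    (hz : 1 ≤ ∑' i : u, (bowenBall f (m i) (cx i) r).indicator (fun _ => ENNReal.ofReal (c i)) z) :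
    ∃ n : ℕ, ENNReal.ofReal (1 / (n : ℝ) ^ 2) < levelWeight f u cx m c r n z := by
  by_contra! hsmall
  have hlow : ∀ n < 2, levelWeight f u cx m c r n z = 0 := fun n hn => by
    by_contra h
    obtain ⟨i, hiu, rfl, -⟩ := nonempty_levelIndices_of_levelWeight_ne_zero h
    exact absurd (hm i hiu) (by omega)
  have : ∑' n, levelWeight f u cx m c r n z < 1 := calc
    _ = ∑' n, levelWeight f u cx m c r (n + 2) z := by
      rw [← ENNReal.summable.sum_add_tsum_nat_add',
        Finset.sum_eq_zero fun n hn => hlow n (Finset.mem_range.1 hn), zero_add]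
    _ ≤ ∑' n : ℕ, ENNReal.ofReal (1 / ((n : ℝ) + 2) ^ 2) :=
      ENNReal.tsum_le_tsum fun n => by exact_mod_cast hsmall (n + 2)
    _ < 1 := tsum_ofReal_inv_sq_add_two_lt_one
  rw [← tsum_levelWeight] at hz
  exact this.not_ge hz

theorem ofReal_exp_le_tsum_levelIndices [CompactSpace X] (hf : ∀ n, Continuous (f n))
    (hψ : Continuous ψ) {α δ : ℝ} (hn : 0 < n)
    (hδ : (n : ℝ) ^ 2 * Real.exp (-(n : ℝ) * δ) ≤ 1)
    (hy : ENNReal.ofReal (1 / (n : ℝ) ^ 2) ≤ levelWeight f u cx m c r n y) :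
    ENNReal.ofReal (Real.exp (-(α + δ) * n + birkSum f ψ n y)) ≤
      ∑' i : levelIndices f u cx m r n y, ENNReal.ofReal (c i) *
        ENNReal.ofReal (Real.exp (-α * m i + birkSupBall f ψ (m i) (cx i) r)) := by
  have hdecay : Real.exp (-(n : ℝ) * δ) ≤ 1 / (n : ℝ) ^ 2 := by
    rw [le_div_iff₀ (by positivity), mul_comm]
    exact hδ
  calc ENNReal.ofReal (Real.exp (-(α + δ) * n + birkSum f ψ n y))
      = ENNReal.ofReal (Real.exp (-(n : ℝ) * δ)) *
          ENNReal.ofReal (Real.exp (-α * n + birkSum f ψ n y)) := by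
        rw [← ENNReal.ofReal_mul (Real.exp_nonneg _), ← Real.exp_add]
        ring_nf
    _ ≤ levelWeight f u cx m c r n y * ENNReal.ofReal (Real.exp (-α * n + birkSum f ψ n y)) := by
        gcongr
        exact (ENNReal.ofReal_le_ofReal hdecay).trans hy
    _ = ∑' i : levelIndices f u cx m r n y,
          ENNReal.ofReal (c i) * ENNReal.ofReal (Real.exp (-α * n + birkSum f ψ n y)) :=
        ENNReal.tsum_mul_right.symm
    _ ≤ _ := ENNReal.tsum_le_tsum fun ⟨i, _, hmi, hyi⟩ => by
        subst hmi
        gcongr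
        exact birkSum_le_birkSupBall hf hψ hyi

theorem pairwise_disjoint_levelIndices {T : ℕ → Set X} (hrs : r + r ≤ s)
    (hT : ∀ n, (T n).Pairwise fun x y => y ∉ bowenBall f n x s) :
    Pairwise (Disjoint on fun p : Σ n, T n => levelIndices f u cx m r p.1 p.2) := by
  rintro ⟨n, y, hy⟩ ⟨n', y', hy'⟩ hne
  refine Set.disjoint_left.2 fun i ⟨_, hin, hyi⟩ ⟨_, hin', hyi'⟩ => hne ?_
  obtain rfl : n = n' := hin.symm.trans hin'
  by_cases hyy : y = y'
  · subst hyy; rfl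
  · exact absurd (bowenBall_mono hrs (mem_bowenBall_of_mem_of_mem hyi hyi')) (hT n hy hy' hyy)

theorem MpreC_le_tsum_weighted [CompactSpace X] (hf : ∀ n, Continuous (f n))
    (hψ : Continuous ψ) {Z : Set X} {ε δ α : ℝ} (hε : 0 < ε) {N : ℕ} (hN2 : 2 ≤ N)
    (hN : ∀ n : ℕ, N ≤ n → (n : ℝ) ^ 2 * Real.exp (-(n : ℝ) * δ) ≤ 1)
    (hm : ∀ i ∈ u, N ≤ m i)
    (hcov : ∀ z ∈ Z, 1 ≤ ∑' i : u,
      (bowenBall f (m i) (cx i) ε).indicator (fun _ => ENNReal.ofReal (c i)) z) :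
    MpreC f ψ Z N (α + δ) (6 * ε) ≤ ∑' i : u, ENNReal.ofReal (c i) *
      ENNReal.ofReal (Real.exp (-α * m i + birkSupBall f ψ (m i) (cx i) ε)) := by
  have : Nonempty X := ⟨cx 0⟩
  choose T hTgood hTsep hTspan using fun n : ℕ => exists_bowenBall_separated_spanning (f := f)
    {z ∈ Z | ENNReal.ofReal (1 / (n : ℝ) ^ 2) < levelWeight f u cx m c ε n z} n
    (by positivity : 0 < 6 * ε)
  have hI := pairwise_disjoint_levelIndices (u := u) (cx := cx) (m := m)
    (by linarith : ε + ε ≤ 6 * ε) hTsep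
  have hweight (p : Σ n, T n) :
      ENNReal.ofReal (1 / (p.1 : ℝ) ^ 2) < levelWeight f u cx m c ε p.1 p.2 :=
    (hTgood p.1 p.2.2).2
  have hne (p : Σ n, T n) : (levelIndices f u cx m ε p.1 p.2).Nonempty :=
    nonempty_levelIndices_of_levelWeight_ne_zero (pos_of_gt (hweight p)).ne'
  have hlevel (p : Σ n, T n) : N ≤ p.1 := by
    obtain ⟨i, hi, hmi, -⟩ := hne p
    exact hmi ▸ hm i hi
  have : Countable (Σ n, T n) := countable_of_pairwise_disjoint_nonempty hI hne
  have hZ : Z ⊆ ⋃ p : Σ n, T n, bowenBall f p.1 p.2 (6 * ε) := fun z hz => by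
    obtain ⟨n, hn⟩ := exists_inv_sq_lt_levelWeight hN2 hm (hcov z hz)
    obtain ⟨t, ht, hzt⟩ := hTspan n z ⟨hz, hn⟩
    exact mem_iUnion.2 ⟨⟨n, t, ht⟩, hzt⟩
  calc MpreC f ψ Z N (α + δ) (6 * ε)
      ≤ ∑' p : Σ n, T n, ENNReal.ofReal (Real.exp (-(α + δ) * p.1 + birkSum f ψ p.1 p.2)) :=
        MpreC_le_tsum (fun p : Σ n, T n => (p.2 : X)) (fun p => p.1) hlevel hZ
    _ ≤ ∑' p : Σ n, T n, ∑' i : levelIndices f u cx m ε p.1 p.2, ENNReal.ofReal (c i) *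
          ENNReal.ofReal (Real.exp (-α * m i + birkSupBall f ψ (m i) (cx i) ε)) :=
        ENNReal.tsum_le_tsum fun p => ofReal_exp_le_tsum_levelIndices hf hψ
          (by linarith [hlevel p]) (hN _ (hlevel p)) (hweight p).le
    _ ≤ _ := tsum_tsum_subtype_le_of_pairwise_disjoint hI (fun _ _ hi => hi.1) fun i =>
        ENNReal.ofReal (c i) * ENNReal.ofReal (Real.exp (-α * m i + birkSupBall f ψ (m i) (cx i) ε))

end WeightedCover

end

theorem statement15_general [CompactSpace X]
    (f : ℕ → X → X) (hf : ∀ n, Continuous (f n)) (ψ : X → ℝ) (hψ : Continuous ψ)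
    (Z : Set X) (ε δ α : ℝ) (hε : 0 < ε) (N : ℕ) (hN2 : 2 ≤ N)
    (hN : ∀ n : ℕ, N ≤ n → (n : ℝ) ^ 2 * Real.exp (-(n : ℝ) * δ) ≤ 1) :
    MpreC f ψ Z N (α + δ) (6 * ε) ≤ Wpre f ψ Z N α ε := by
  refine le_sInf ?_
  rintro _ ⟨u, cx, m, c, -, hm, hcov, rfl⟩
  exact MpreC_le_tsum_weighted hf hψ hε hN2 hN hm hcov

/-- If `N ≥ 2` is such that `n² e^{−nδ} ≤ 1` for all `n ≥ N`, then
`𝓜(N, α+δ, 6ε, Z, ψ) ≤ W(N, α, ε, Z, ψ)`. -/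
theorem statement15 [CompactSpace X]
    (f : ℕ → X → X) (hf : ∀ n, Continuous (f n)) (ψ : X → ℝ) (hψ : Continuous ψ)
    (Z : Set X) (ε δ α : ℝ) (hε : 0 < ε) (hδ : 0 < δ) (N : ℕ) (hN2 : 2 ≤ N)
    (hN : ∀ n : ℕ, N ≤ n → (n : ℝ) ^ 2 * Real.exp (-(n : ℝ) * δ) ≤ 1) :
    MpreC f ψ Z N (α + δ) (6 * ε) ≤ Wpre f ψ Z N α ε :=
  statement15_general f hf ψ hψ Z ε δ α hε N hN2 hN
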